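/- arXiv:1806.03665 — 3 statements merged into one kernel-verified Lean document; each statement's English description precedes it below -/
import Mathlib

section
/- Every finite simple graph that is connected and strongly 1-separable is a tree. -/
/-- A pair of distinct vertices `u, v` is *strongly `k`-separable* in `G` if there is a
set `S ⊆ V \ {u,v}` with `|S| ≤ k - δ_{uv}` (where `δ_{uv} = 1` iff `u` and `v` are
adjacent) such that every path from `u` to `v` in `G` that does not use the edge
`(u,v)` contains a vertex of `S`. -/
def StronglySepPair {V : Type*} (G : SimpleGraph V) (k : ℕ) (u v : V) : Prop :=
  ∃ S : Finset V, u ∉ S ∧ v ∉ S ∧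
    (G.Adj u v → S.card + 1 ≤ k) ∧ (¬ G.Adj u v → S.card ≤ k) ∧
    ∀ p : G.Walk u v, p.IsPath → s(u, v) ∉ p.edges → ∃ w ∈ p.support, w ∈ S

/-- `G` is *strongly `k`-separable* if every pair of distinct vertices is strongly
`k`-separable. -/
def StronglySeparable {V : Type*} (G : SimpleGraph V) (k : ℕ) : Prop :=
  ∀ u v : V, u ≠ v → StronglySepPair G k u v

/-- Every finite simple graph that is connected and strongly 1-separable is a tree. -/
theorem connected_strongly_one_separable_isTree {V : Type*} [Fintype V] (G : SimpleGraph V)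
    (hconn : G.Connected) (h : StronglySeparable G 1) : G.IsTree := by
  classical
  refine ⟨hconn, ?_⟩
  rw [SimpleGraph.isAcyclic_iff_forall_adj_isBridge]
  intro u v hadj
  rw [SimpleGraph.isBridge_iff_adj_and_forall_walk_mem_edges]
  refine fun p => ?_
  obtain ⟨S, -, -, hcard, -, hsep⟩ := h u v hadj.ne
  have hc := hcard hadj
  have hS : S = ∅ := Finset.card_eq_zero.mp (by omega)
  by_contra hne
  have hsub := SimpleGraph.Walk.edges_bypass_subset p
  obtain ⟨w, -, hwS⟩ := hsep p.bypass (SimpleGraph.Walk.bypass_isPath p)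
    (fun hmem => hne (hsub hmem))
  simp [hS] at hwS
end

section
/- Let p ≥ 5 and let G be the simple graph on vertex set {1, 2, ..., p} whose edge set consists of the edge (1,2) together with the edges (u,1) and (u,2) for every u with 3 ≤ u ≤ p, and no other edges. Then for every k with 2 ≤ k < p − 2, the graph G is k-separable but not strongly k-separable. -/
/-- A non-adjacent pair of distinct vertices `u, v` is *`k`-separable* in `G` if there is a
set `S ⊆ V \ {u,v}` with `|S| ≤ k` such that every path from `u` to `v` in `G` contains a
vertex of `S`. -/
def SepPair {V : Type*} (G : SimpleGraph V) (k : ℕ) (u v : V) : Prop :=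
  ∃ S : Finset V, u ∉ S ∧ v ∉ S ∧ S.card ≤ k ∧
    ∀ p : G.Walk u v, p.IsPath → ∃ w ∈ p.support, w ∈ S

/-- `G` is *`k`-separable* if every non-adjacent pair of distinct vertices is
`k`-separable. -/
def Separable {V : Type*} (G : SimpleGraph V) (k : ℕ) : Prop :=
  ∀ u v : V, u ≠ v → ¬ G.Adj u v → SepPair G k u v

/-- The graph on vertex set `{1, …, p}` (here `Fin p`, with vertices `1` and `2`
corresponding to `0` and `1`) whose edges are `(1,2)` together with `(u,1)` and `(u,2)`
for every `u` with `3 ≤ u ≤ p`, and no other edges: two distinct vertices are adjacent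
iff one of them is `1` or `2`. -/
def twoHubGraph (p : ℕ) : SimpleGraph (Fin p) where
  Adj a b := a ≠ b ∧ ((a : ℕ) < 2 ∨ (b : ℕ) < 2)
  symm := ⟨fun a b h => ⟨h.1.symm, h.2.symm⟩⟩
  loopless := ⟨fun a h => h.1 rfl⟩

/-- For `p ≥ 5` and every `k` with `2 ≤ k < p - 2`, the graph consisting of the edge
`(1,2)` and the edges `(u,1)`, `(u,2)` for `3 ≤ u ≤ p` is `k`-separable but not strongly
`k`-separable. -/
theorem twoHubGraph_separable_not_stronglySeparable (p k : ℕ) (hp : 5 ≤ p)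
    (hk₁ : 2 ≤ k) (hk₂ : k < p - 2) :
    Separable (twoHubGraph p) k ∧ ¬ StronglySeparable (twoHubGraph p) k := by
  have hz : (0 : ℕ) < p := by omega
  set z : Fin p := ⟨0, by omega⟩ with hzdef
  set o : Fin p := ⟨1, by omega⟩ with hodef
  have hzo : z ≠ o := by simp [hzdef, hodef, Fin.ext_iff]
  constructor
  · intro u v huv hadj
    have hu2 : 2 ≤ (u : ℕ) ∧ 2 ≤ (v : ℕ) := by
      by_contra h
      exact hadj ⟨huv, by omega⟩
    refine ⟨{z, o}, ?_, ?_, ?_, ?_⟩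
    · intro hmem
      simp only [Finset.mem_insert, Finset.mem_singleton] at hmem
      rcases hmem with h | h <;> (rw [Fin.ext_iff] at h; simp [hzdef, hodef] at h; omega)
    · intro hmem
      simp only [Finset.mem_insert, Finset.mem_singleton] at hmem
      rcases hmem with h | h <;> (rw [Fin.ext_iff] at h; simp [hzdef, hodef] at h; omega)
    · calc ({z, o} : Finset (Fin p)).card ≤ ({o} : Finset (Fin p)).card + 1 :=
            Finset.card_insert_le _ _
        _ ≤ k := by simp; omega
    · intro q hq
      cases q with
      | nil => exact absurd rfl huv
      | @cons _ w _ h q' =>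
        have hw2 : (w : ℕ) < 2 := by
          rcases h.2 with h' | h'
          · omega
          · exact h'
        refine ⟨w, ?_, ?_⟩
        · rw [SimpleGraph.Walk.support_cons]
          exact List.mem_cons_of_mem _ q'.start_mem_support
        · simp only [Finset.mem_insert, Finset.mem_singleton, Fin.ext_iff, hzdef, hodef]
          omega
  · intro hS
    obtain ⟨S, hzS, hoS, hadj, -, hhit⟩ := hS z o hzo
    have hcard : S.card + 1 ≤ k := hadj ⟨hzo, Or.inl (by simp [hzdef])⟩
    have hmem : ∀ w : Fin p, 2 ≤ (w : ℕ) → w ∈ S := by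
      intro w hw
      have hwz : w ≠ z := by rw [Ne, Fin.ext_iff]; simp [hzdef]; omega
      have hwo : w ≠ o := by rw [Ne, Fin.ext_iff]; simp [hodef]; omega
      have a1 : (twoHubGraph p).Adj z w := ⟨hwz.symm, Or.inl (by simp [hzdef])⟩
      have a2 : (twoHubGraph p).Adj w o := ⟨hwo, Or.inr (by simp [hodef])⟩
      let q : (twoHubGraph p).Walk z o :=
        SimpleGraph.Walk.cons a1 (SimpleGraph.Walk.cons a2 SimpleGraph.Walk.nil)
      have hpath : q.IsPath := by
        rw [SimpleGraph.Walk.isPath_def]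
        simp only [q, SimpleGraph.Walk.support_cons, SimpleGraph.Walk.support_nil]
        simp [List.nodup_cons, hwz, hwo, hzo, Ne.symm hwz, Ne.symm hwo]
      have hedge : s(z, o) ∉ q.edges := by
        intro h
        simp only [q, SimpleGraph.Walk.edges_cons, SimpleGraph.Walk.edges_nil,
          List.mem_cons, List.not_mem_nil, or_false] at h
        rcases h with h | h <;> rw [Sym2.eq_iff] at h <;> rcases h with ⟨h1, h2⟩ | ⟨h1, h2⟩
        · exact hwo h2.symm
        · exact hwz h1.symm
        · exact hwz h1.symm
        · exact hzo h1
      obtain ⟨x, hxsup, hxS⟩ := hhit q hpath hedge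
      simp only [q, SimpleGraph.Walk.support_cons, SimpleGraph.Walk.support_nil,
        List.mem_cons, List.mem_singleton, List.not_mem_nil, or_false] at hxsup
      rcases hxsup with rfl | rfl | rfl
      · exact absurd hxS hzS
      · exact hxS
      · exact absurd hxS hoS
    have hsub : (Finset.univ \ {z, o} : Finset (Fin p)) ⊆ S := by
      intro w hw
      simp only [Finset.mem_sdiff, Finset.mem_insert, Finset.mem_singleton] at hw
      push_neg at hw
      apply hmem
      have h1 := hw.2.1
      have h2 := hw.2.2
      rw [Ne, Fin.ext_iff] at h1 h2
      simp [hzdef, hodef] at h1 h2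
      omega
    have hcard2 : (Finset.univ \ {z, o} : Finset (Fin p)).card = p - 2 := by
      rw [Finset.card_sdiff_of_subset (Finset.subset_univ _)]
      simp [Finset.card_insert_of_notMem, hzo]
    have := Finset.card_le_card hsub
    omega
end

section
/- Let G' = (V', E') be a finite tree, and let G be the simple graph obtained from G' by adding two new vertices u and v, where u and v are each adjacent to every vertex of V', and u and v are not adjacent to each other. Then: (i) for every k with k < |V'|, the pair (u, v) is not strongly k-separable in G (so G is not strongly k-separable for any k < |V'|); and (ii) the set {u, v} is a 1-generalized FVS of G of size 2, i.e., the induced subgraph of G on V' is strongly 1-separable. -/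
open SimpleGraph

/-- Let `G'` be a finite tree and let `G` be obtained from `G'` by adding two new
non-adjacent vertices `u` and `v`, each adjacent to every vertex of `G'`. Then (i) for
every `k < |V'|` the pair `(u,v)` is not strongly `k`-separable in `G` (so `G` is not
strongly `k`-separable for any such `k`), and (ii) `{u, v}` is a `1`-generalized FVS of
`G` of size `2`, i.e. the induced subgraph of `G` on `V'` is strongly `1`-separable. -/
theorem tree_plus_two_hubs {V : Type*} [Fintype V] (G : SimpleGraph V) (u v : V)
    (huv : u ≠ v) (hnadj : ¬ G.Adj u v)
    (hu : ∀ w : V, w ≠ u → w ≠ v → G.Adj u w)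
    (hv : ∀ w : V, w ≠ u → w ≠ v → G.Adj v w)
    (htree : (G.induce (({u, v} : Set V)ᶜ)).IsTree) :
    (∀ k : ℕ, k < (({u, v} : Set V)ᶜ).ncard →
      ¬ StronglySepPair G k u v ∧ ¬ StronglySeparable G k)
    ∧ StronglySeparable (G.induce (({u, v} : Set V)ᶜ)) 1 := by
  classical
  have key : ∀ k : ℕ, k < (({u, v} : Set V)ᶜ).ncard → ¬ StronglySepPair G k u v := by
    rintro k hk ⟨S, huS, hvS, _, hcard, hsep⟩
    have hScard : S.card ≤ k := hcard hnadj
    have hsub : ¬ (({u, v} : Set V)ᶜ).toFinset ⊆ S := by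
      intro hsub
      have := Finset.card_le_card hsub
      rw [Set.ncard_eq_toFinset_card'] at hk
      omega
    obtain ⟨w, hwmem, hwS⟩ := Finset.not_subset.mp hsub
    simp only [Set.toFinset_compl, Finset.mem_compl, Set.mem_toFinset, Set.mem_insert_iff,
      Set.mem_singleton_iff, not_or] at hwmem
    obtain ⟨hwu, hwv⟩ := hwmem
    set p : G.Walk u v := Walk.cons (hu w hwu hwv) (Walk.cons ((hv w hwu hwv).symm) Walk.nil)
      with hp
    have hpath : p.IsPath := by
      simp [hp, Walk.isPath_def, huv, hwu, hwv, Ne.symm hwu, Ne.symm hwv]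
    have hedge : s(u, v) ∉ p.edges := by
      simp only [hp, Walk.edges_cons, Walk.edges_nil, List.mem_cons, List.not_mem_nil,
        or_false, Sym2.eq_iff, not_or]
      exact ⟨⟨fun h => hwv h.2.symm, fun h => huv h.2.symm⟩,
        ⟨fun h => hwu h.1.symm, fun h => huv h.1⟩⟩
    obtain ⟨x, hxsup, hxS⟩ := hsep p hpath hedge
    simp [hp] at hxsup
    rcases hxsup with rfl | rfl | rfl
    · exact huS hxS
    · exact hwS hxS
    · exact hvS hxS
  refine ⟨fun k hk => ⟨key k hk, fun hsep => key k hk (hsep u v huv)⟩, ?_⟩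
  intro a b hab
  set G' := G.induce (({u, v} : Set V)ᶜ) with hG'
  obtain ⟨p₀, hp₀, huniq⟩ := htree.existsUnique_path a b
  by_cases hadj : G'.Adj a b
  · refine ⟨∅, by simp, by simp, by simp, by simp, ?_⟩
    intro p hp hpe
    have h1 : p = Walk.cons hadj Walk.nil := by
      rw [huniq p hp, huniq (Walk.cons hadj Walk.nil) (by simp [Walk.isPath_def, hab])]
    rw [h1] at hpe
    simp at hpe
  · cases p₀ with
    | nil => exact absurd rfl hab
    | @cons _ c _ h q =>
      rw [Walk.cons_isPath_iff] at hp₀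
      obtain ⟨hq, haq⟩ := hp₀
      have hcb : c ≠ b := by
        rintro rfl
        rw [Walk.isPath_iff_eq_nil] at hq
        subst hq
        exact hadj h
      have hca : c ≠ a := fun hca => haq (hca ▸ q.start_mem_support)
      refine ⟨{c}, by simp [Ne.symm hca], by simp [Ne.symm hcb],
        fun h' => absurd h' hadj, by simp, ?_⟩
      intro p hp _
      refine ⟨c, ?_, by simp⟩
      rw [huniq p hp]
      simp
end
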